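/- arXiv:1809.11126 — 5 statements merged into one kernel-verified Lean document; each statement's English description precedes it below -/
import Mathlib

section
/- There exists an absolute constant C > 0 such that for every f in the Zygmund class Λ_*, every h′ > h > 0 and every x, t ∈ ℝ with |x − t| < h′/2, one has |Δ₂f(x,h) − Δ₂f(t,h′)| ≤ C ‖f‖_* ( ((h′−h)/h′)(1 + log(h′/(h′−h))) + (|x−t|/h′) log(h′/|x−t| + 1) ). -/
noncomputable section
open MeasureTheory
open scoped ENNReal NNReal

/-- Second divided difference `Δ₂f(x,h) = (f(x+h) - 2f(x) + f(x-h))/h`. -/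
def delta2 (f : ℝ → ℝ) (x h : ℝ) : ℝ := (f (x + h) - 2 * f x + f (x - h)) / h

/-- `M` is a bound for the Zygmund seminorm of `f`. -/
def ZygBound (f : ℝ → ℝ) (M : ℝ) : Prop := ∀ x h : ℝ, 0 < h → |delta2 f x h| ≤ M

/-- `f` belongs to the Zygmund class `Λ_*`. -/
def MemZygmund (f : ℝ → ℝ) : Prop := Continuous f ∧ ∃ M, ZygBound f M

/-- The Zygmund seminorm `‖f‖_* = sup_{x, h>0} |Δ₂f(x,h)|`. -/
def zygNorm (f : ℝ → ℝ) : ℝ := sInf {M | 0 ≤ M ∧ ZygBound f M}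

/-- Average of `g` over the interval `(a,b)`. -/
def intervalAvg (g : ℝ → ℝ) (a b : ℝ) : ℝ := (b - a)⁻¹ * ∫ t in a..b, g t

/-- `M` bounds the mean oscillation of `g` over all finite intervals. -/
def BMOBound (g : ℝ → ℝ) (M : ℝ) : Prop := ∀ a b : ℝ, a < b →
  (∫⁻ x in Set.Ioo a b, ENNReal.ofReal ((g x - intervalAvg g a b)^2))
    ≤ ENNReal.ofReal (M^2 * (b - a))

/-- `g` has bounded mean oscillation. -/
def MemBMO (g : ℝ → ℝ) : Prop := LocallyIntegrable g volume ∧ ∃ M, BMOBound g M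

/-- `f ∈ I(BMO)`: `f` is continuous and its distributional derivative is a BMO
function, i.e. `f` is a primitive of a BMO function. -/
def MemIBMO (f : ℝ → ℝ) : Prop := Continuous f ∧
  ∃ g : ℝ → ℝ, MemBMO g ∧ ∀ x, f x = f 0 + ∫ t in (0:ℝ)..x, g t

/-- The set `A(f,ε) = {(x,h) : h > 0, |Δ₂f(x,h)| > ε}` in the upper half-plane. -/
def Aset (f : ℝ → ℝ) (ε : ℝ) : Set (ℝ × ℝ) := {p | 0 < p.2 ∧ ε < |delta2 f p.1 p.2|}

/-- `∫_I ∫_0^{|I|} χ_{A(f,ε)}(x,h) dh dx / h` for the interval `I = (a,b)`. -/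
def Cquant (f : ℝ → ℝ) (ε a b : ℝ) : ℝ≥0∞ :=
  ∫⁻ x in Set.Ioo a b, ∫⁻ h in Set.Ioo 0 (b - a),
    (Aset f ε).indicator (fun _ => (1:ℝ≥0∞)) (x, h) / ENNReal.ofReal h

/-- `C(f,ε) = sup_I (1/|I|) ∫_I ∫_0^{|I|} χ_{A(f,ε)} dh dx/h < ∞`. -/
def CFinite (f : ℝ → ℝ) (ε : ℝ) : Prop :=
  ∃ K : ℝ, ∀ a b : ℝ, a < b → Cquant f ε a b ≤ ENNReal.ofReal (K * (b - a))

/-- `dist(f, I(BMO)) = inf {‖f - g‖_* : g ∈ I(BMO)}`. -/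
def distIBMO (f : ℝ → ℝ) : ℝ :=
  sInf {r | ∃ g, MemIBMO g ∧ r = zygNorm (fun x => f x - g x)}

namespace Zyg5

/-- mixed difference: `(f(u+s)-f(u)) - (f(u+H+s)-f(u+H))`. -/
def Dm (f : ℝ → ℝ) (u s H : ℝ) : ℝ := (f (u+s) - f u) - (f (u+H+s) - f (u+H))

variable {f : ℝ → ℝ} {M : ℝ}

lemma abs_sub'' (a b : ℝ) : |a - b| ≤ |a| + |b| := by
  calc |a - b| = |a + (-b)| := by ring_nf
  _ ≤ |a| + |(-b)| := abs_add_le _ _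
  _ = |a| + |b| := by rw [abs_neg]

lemma star (HM : ∀ u h : ℝ, 0 < h → |f (u+h) - 2 * f u + f (u-h)| ≤ M * h)
    (u s r : ℝ) (hr : 0 < r) (hrs : r ≤ s) :
    |f (u+s+r) - f (u+s) - f (u+r) + f u| ≤ M * s := by
  rcases eq_or_lt_of_le hrs with h | h
  · subst h
    have h1 := HM (u+r) r hr
    have e1 : u + r - r = u := by ring
    rw [e1] at h1
    have e2 : |f (u+r+r) - f (u+r) - f (u+r) + f u| = |f (u+r+r) - 2 * f (u+r) + f u| := by
      congr 1; ring
    rw [e2]; exact h1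
  · set c := u + (s+r)/2 with hc
    have h1 := HM c ((s+r)/2) (by linarith)
    have h2 := HM c ((s-r)/2) (by linarith)
    have e1 : c + (s+r)/2 = u+s+r := by rw [hc]; ring
    have e2 : c - (s+r)/2 = u := by rw [hc]; ring
    have e3 : c + (s-r)/2 = u+s := by rw [hc]; ring
    have e4 : c - (s-r)/2 = u+r := by rw [hc]; ring
    rw [e1, e2] at h1
    rw [e3, e4] at h2
    have key : f (u+s+r) - f (u+s) - f (u+r) + f u
        = (f (u+s+r) - 2 * f c + f u) - (f (u+s) - 2 * f c + f (u+r)) := by ring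
    rw [key]
    have := abs_sub'' (f (u+s+r) - 2 * f c + f u) (f (u+s) - 2 * f c + f (u+r))
    have e5 : M * ((s+r)/2) + M * ((s-r)/2) = M * s := by ring
    linarith

lemma Dm_base (HM : ∀ u h : ℝ, 0 < h → |f (u+h) - 2 * f u + f (u-h)| ≤ M * h)
    (u s H : ℝ) (hs : 0 < s) (hH : 0 < H) :
    |Dm f u s H| ≤ M * max s H := by
  rcases le_total s H with h | h
  · have := star HM u H s hs h
    have e : Dm f u s H = -(f (u+H+s) - f (u+H) - f (u+s) + f u) := by unfold Dm; ring
    rw [e, abs_neg, max_eq_right h]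
    exact this
  · have := star HM u s H hH h
    have e0 : u + s + H = u + H + s := by ring
    rw [e0] at this
    have e : Dm f u s H = -(f (u+H+s) - f (u+s) - f (u+H) + f u) := by unfold Dm; ring
    rw [e, abs_neg, max_eq_left h]
    exact this

lemma Dm_half (HM : ∀ u h : ℝ, 0 < h → |f (u+h) - 2 * f u + f (u-h)| ≤ M * h)
    (u s H : ℝ) (hs : 0 < s) :
    |Dm f u s H| ≤ |Dm f u (2*s) H| / 2 + M * s := by
  have h1 := HM (u+s) s hs
  have e1 : u + s + s = u + 2*s := by ring
  have e2 : u + s - s = u := by ring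
  rw [e1, e2] at h1
  have h2 := HM (u+H+s) s hs
  have e3 : u + H + s + s = u + H + 2*s := by ring
  have e4 : u + H + s - s = u + H := by ring
  rw [e3, e4] at h2
  have key : Dm f u s H = Dm f u (2*s) H / 2
      - ((f (u+2*s) - 2 * f (u+s) + f u) - (f (u+H+2*s) - 2 * f (u+H+s) + f (u+H))) / 2 := by
    unfold Dm; ring
  rw [key]
  have t1 := abs_sub'' (Dm f u (2*s) H / 2)
    (((f (u+2*s) - 2 * f (u+s) + f u) - (f (u+H+2*s) - 2 * f (u+H+s) + f (u+H))) / 2)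
  have t2 := abs_sub'' (f (u+2*s) - 2 * f (u+s) + f u) (f (u+H+2*s) - 2 * f (u+H+s) + f (u+H))
  have t3 : |Dm f u (2*s) H / 2| = |Dm f u (2*s) H| / 2 := by
    rw [abs_div]; norm_num
  have t4 : |((f (u+2*s) - 2 * f (u+s) + f u) - (f (u+H+2*s) - 2 * f (u+H+s) + f (u+H))) / 2|
      = |(f (u+2*s) - 2 * f (u+s) + f u) - (f (u+H+2*s) - 2 * f (u+H+s) + f (u+H))| / 2 := by
    rw [abs_div]; norm_num
  rw [t3, t4] at t1
  linarith

lemma Dm_pow (HM : ∀ u h : ℝ, 0 < h → |f (u+h) - 2 * f u + f (u-h)| ≤ M * h) :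
    ∀ n : ℕ, ∀ u s H : ℝ, 0 < s → 0 < H →
      |Dm f u s H| ≤ M * max ((2:ℝ)^n * s) H / 2^n + M * n * s := by
  intro n
  induction n with
  | zero => intro u s H hs hH; simpa using Dm_base HM u s H hs hH
  | succ n ih =>
    intro u s H hs hH
    have h1 := Dm_half HM u s H hs
    have h2 := ih u (2*s) H (by linarith) hH
    have e : (2:ℝ)^n * (2*s) = 2^(n+1) * s := by ring
    rw [e] at h2
    have hpos : (0:ℝ) < 2^n := by positivity
    have h3 : |Dm f u (2*s) H| / 2
        ≤ M * max ((2:ℝ)^(n+1) * s) H / 2^(n+1) + M * n * s := by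
      have e2 : M * max ((2:ℝ)^(n+1) * s) H / 2^n / 2
          = M * max ((2:ℝ)^(n+1) * s) H / 2^(n+1) := by
        rw [pow_succ]; ring
      calc |Dm f u (2*s) H| / 2
          ≤ (M * max ((2:ℝ)^(n+1) * s) H / 2^n + M * n * (2*s)) / 2 := by linarith
        _ = M * max ((2:ℝ)^(n+1) * s) H / 2^n / 2 + M * n * s := by ring
        _ = M * max ((2:ℝ)^(n+1) * s) H / 2^(n+1) + M * n * s := by rw [e2]
    have : (M : ℝ) * (n+1) * s = M * n * s + M * s := by ring
    push_cast
    linarith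

lemma Dm_log (HM : ∀ u h : ℝ, 0 < h → |f (u+h) - 2 * f u + f (u-h)| ≤ M * h)
    (u s H : ℝ) (hs : 0 < s) (hsH : s ≤ H) :
    |Dm f u s H| ≤ 2 * M * s * (1 + Real.log (H/s)) := by
  have hM0 : 0 ≤ M := by
    have h0 := HM 0 1 one_pos
    have := abs_nonneg (f (0+1) - 2 * f 0 + f (0-1))
    linarith
  have hH : 0 < H := lt_of_lt_of_le hs hsH
  have hHs1 : 1 ≤ H / s := (le_div_iff₀ hs).mpr (by linarith)
  have hL0 : 0 ≤ Real.log (H/s) := Real.log_nonneg hHs1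
  set a := Real.logb 2 (H/s) with ha
  have ha0 : 0 ≤ a := Real.logb_nonneg one_lt_two hHs1
  set n := ⌈a⌉₊ with hn
  have hna : a ≤ n := Nat.le_ceil a
  have hn1 : (n:ℝ) ≤ a + 1 := by
    have := Nat.ceil_lt_add_one ha0
    linarith
  have hpow : H ≤ 2^n * s := by
    have h1 : (H/s) = (2:ℝ) ^ a := (Real.rpow_logb two_pos (by norm_num) (by positivity)).symm
    have h2 : (2:ℝ) ^ a ≤ (2:ℝ) ^ (n:ℝ) :=
      Real.rpow_le_rpow_of_exponent_le one_le_two hna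
    have h3 : (2:ℝ) ^ (n:ℝ) = (2:ℝ) ^ n := Real.rpow_natCast 2 n
    have : H / s ≤ 2^n := by rw [h1]; rw [h3] at h2; exact h2
    calc H = (H/s) * s := by field_simp
      _ ≤ 2^n * s := by nlinarith
  have key := Dm_pow HM n u s H hs hH
  rw [max_eq_left hpow] at key
  have hpos : (0:ℝ) < 2^n := by positivity
  have e1 : M * ((2:ℝ)^n * s) / 2^n = M * s := by field_simp
  rw [e1] at key
  -- n ≤ a + 1, a ≤ 2 log(H/s) since log 2 > 1/2
  have hl2 : (1/2 : ℝ) < Real.log 2 := by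
    have := Real.log_two_gt_d9; linarith
  have ha2 : a ≤ 2 * Real.log (H/s) := by
    have hd : a = Real.log (H/s) / Real.log 2 := by rw [ha, Real.logb]
    rw [hd]
    rw [div_le_iff₀ (by linarith : (0:ℝ) < Real.log 2)]
    nlinarith
  have hfin : M * s + M * n * s ≤ 2 * M * s * (1 + Real.log (H/s)) := by
    have hn2 : (n:ℝ) ≤ 2 * Real.log (H/s) + 1 := by linarith
    nlinarith [mul_nonneg hM0 hs.le]
  linarith

end Zyg5

namespace Zyg5
variable {f : ℝ → ℝ} {M : ℝ}

lemma stepA (HM : ∀ u h : ℝ, 0 < h → |f (u+h) - 2 * f u + f (u-h)| ≤ M * h)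
    (hM0 : 0 ≤ M) (x h h' : ℝ) (hh : 0 < h) (hhh : h < h') :
    |delta2 f x h - delta2 f x h'|
      ≤ 5 * M * ((h'-h)/h') * (1 + Real.log (h'/(h'-h))) := by
  have hh' : 0 < h' := hh.trans hhh
  have hδ : 0 < h' - h := by linarith
  have hd1 := Dm_log HM (x - h') (h'-h) (h+h') hδ (by linarith)
  unfold Dm at hd1
  rw [show x - h' + (h'-h) = x - h by ring, show x - h' + (h+h') + (h'-h) = x + h' by ring,
    show x - h' + (h+h') = x + h by ring] at hd1
  have hG := HM x h hh
  set D : ℝ := (f (x-h) - f (x-h')) - (f (x+h') - f (x+h)) with hD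
  have iden : delta2 f x h - delta2 f x h'
      = D / h' + (f (x+h) - 2 * f x + f (x-h)) * ((h'-h)/(h*h')) := by
    unfold delta2
    rw [hD]
    field_simp
    ring
  have hlog1 : Real.log ((h+h')/(h'-h)) ≤ 1 + Real.log (h'/(h'-h)) := by
    have l1 : Real.log ((h+h')/(h'-h)) ≤ Real.log (2*h'/(h'-h)) := by
      apply Real.log_le_log (by positivity)
      exact (div_le_div_iff_of_pos_right hδ).mpr (by linarith)
    have l2 : Real.log (2*h'/(h'-h)) = Real.log 2 + Real.log (h'/(h'-h)) := by
      rw [show 2*h'/(h'-h) = 2 * (h'/(h'-h)) by ring]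
      rw [Real.log_mul (by norm_num) (by positivity)]
    have l3 : Real.log 2 ≤ 1 := by
      have := Real.log_two_lt_d9; linarith
    linarith
  have hL0 : 0 ≤ Real.log (h'/(h'-h)) := Real.log_nonneg ((le_div_iff₀ hδ).mpr (by linarith))
  set L := Real.log (h'/(h'-h)) with hLdef
  have hd2 : |D| ≤ 4 * M * (h'-h) * (1 + L) := by
    have : 2 * M * (h'-h) * (1 + Real.log ((h+h')/(h'-h))) ≤ 2 * M * (h'-h) * (2 + L) := by
      apply mul_le_mul_of_nonneg_left (by linarith) (by positivity)
    nlinarith [mul_nonneg (mul_nonneg hM0 hδ.le) hL0]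
  rw [iden]
  have t1 := abs_add_le (D / h') ((f (x+h) - 2 * f x + f (x-h)) * ((h'-h)/(h*h')))
  have t2 : |D / h'| = |D| / h' := by rw [abs_div, abs_of_pos hh']
  have t3 : |(f (x+h) - 2 * f x + f (x-h)) * ((h'-h)/(h*h'))|
      = |f (x+h) - 2 * f x + f (x-h)| * ((h'-h)/(h*h')) := by
    rw [abs_mul, abs_of_pos (by positivity : (0:ℝ) < (h'-h)/(h*h'))]
  have t4 : |D| / h' ≤ 4 * M * ((h'-h)/h') * (1 + L) := by
    rw [div_le_iff₀ hh']
    calc |D| ≤ 4 * M * (h'-h) * (1 + L) := hd2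
      _ = 4 * M * ((h'-h)/h') * (1 + L) * h' := by field_simp
  have t5 : |f (x+h) - 2 * f x + f (x-h)| * ((h'-h)/(h*h')) ≤ M * ((h'-h)/h') := by
    calc |f (x+h) - 2 * f x + f (x-h)| * ((h'-h)/(h*h'))
        ≤ (M * h) * ((h'-h)/(h*h')) :=
          mul_le_mul_of_nonneg_right hG (by positivity)
      _ = M * ((h'-h)/h') := by field_simp
  have t6 : M * ((h'-h)/h') ≤ M * ((h'-h)/h') * (1 + L) := by
    nlinarith [mul_nonneg hM0 (by positivity : (0:ℝ) ≤ (h'-h)/h')]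
  calc |D / h' + (f (x+h) - 2 * f x + f (x-h)) * ((h'-h)/(h*h'))|
      ≤ |D / h'| + |(f (x+h) - 2 * f x + f (x-h)) * ((h'-h)/(h*h'))| := t1
    _ ≤ 4 * M * ((h'-h)/h') * (1 + L) + M * ((h'-h)/h') * (1 + L) := by
        rw [t2, t3] at *; linarith
    _ = 5 * M * ((h'-h)/h') * (1 + L) := by ring

lemma stepB (HM : ∀ u h : ℝ, 0 < h → |f (u+h) - 2 * f u + f (u-h)| ≤ M * h)
    (x d h' : ℝ) (hd : 0 < d) (hdh : d ≤ h') :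
    |delta2 f x h' - delta2 f (x + d) h'|
      ≤ 4 * M * (d/h') * (1 + Real.log (h'/d)) := by
  have hh' : 0 < h' := lt_of_lt_of_le hd hdh
  have hb1 := Dm_log HM x d h' hd hdh
  have hb2 := Dm_log HM (x - h') d h' hd hdh
  have iden : delta2 f x h' - delta2 f (x + d) h'
      = (Dm f x d h' - Dm f (x - h') d h') / h' := by
    unfold delta2 Dm
    rw [show x + h' + d = x + d + h' by ring, show x - h' + d = x + d - h' by ring,
      show x - h' + h' + d = x + d by ring, show x - h' + h' = x by ring]
    field_simp
    ring
  rw [iden]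
  have t1 := abs_sub'' (Dm f x d h') (Dm f (x - h') d h')
  have t2 : |(Dm f x d h' - Dm f (x - h') d h') / h'|
      = |Dm f x d h' - Dm f (x - h') d h'| / h' := by
    rw [abs_div, abs_of_pos hh']
  rw [t2, div_le_iff₀ hh']
  have e : 4 * M * (d/h') * (1 + Real.log (h'/d)) * h'
      = 2 * M * d * (1 + Real.log (h'/d)) + 2 * M * d * (1 + Real.log (h'/d)) := by
    field_simp; ring
  rw [e]
  linarith

end Zyg5

namespace Zyg5

lemma zyg_facts {f : ℝ → ℝ} (hf : MemZygmund f) :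
    0 ≤ zygNorm f ∧ ZygBound f (zygNorm f) := by
  obtain ⟨-, M, hM⟩ := hf
  have hmem : max M 0 ∈ {K | 0 ≤ K ∧ ZygBound f K} :=
    ⟨le_max_right _ _, fun x h hh => (hM x h hh).trans (le_max_left _ _)⟩
  have hne : Set.Nonempty {K | 0 ≤ K ∧ ZygBound f K} := ⟨_, hmem⟩
  refine ⟨le_csInf hne fun K hK => hK.1, fun x h hh => le_csInf hne fun K hK => hK.2 x h hh⟩

end Zyg5


/-- Lemma 2.1: variation of second divided differences when changing both the
centre and the step: for `h' > h > 0` and `|x - t| < h'/2`,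
`|Δ₂f(x,h) - Δ₂f(t,h')| ≤ C‖f‖_*(((h'-h)/h')(1 + log(h'/(h'-h))) + (|x-t|/h')log(h'/|x-t| + 1))`. -/
theorem stmt5 : ∃ C > (0:ℝ), ∀ f : ℝ → ℝ, MemZygmund f →
    ∀ x t h h' : ℝ, 0 < h → h < h' → |x - t| < h' / 2 →
    |delta2 f x h - delta2 f t h'| ≤ C * zygNorm f *
      (((h' - h) / h') * (1 + Real.log (h' / (h' - h))) +
        (|x - t| / h') * Real.log (h' / |x - t| + 1)) := by
  refine ⟨8, by norm_num, ?_⟩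
  intro f hf x t h h' hh hhh hxt
  obtain ⟨hM0, hZ⟩ := Zyg5.zyg_facts hf
  set M := zygNorm f with hMdef
  have hh' : 0 < h' := hh.trans hhh
  have HM : ∀ u s : ℝ, 0 < s → |f (u+s) - 2 * f u + f (u-s)| ≤ M * s := by
    intro u s hs
    have := hZ u s hs
    rw [delta2, abs_div, abs_of_pos hs, div_le_iff₀ hs] at this
    exact this
  have hδ : 0 < h' - h := by linarith
  have hT1 : 0 ≤ M * (((h'-h)/h') * (1 + Real.log (h'/(h'-h)))) := by
    have hL0 : 0 ≤ Real.log (h'/(h'-h)) :=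
      Real.log_nonneg ((le_div_iff₀ hδ).mpr (by linarith))
    have hq : (0:ℝ) ≤ (h'-h)/h' := by positivity
    exact mul_nonneg hM0 (mul_nonneg hq (by linarith))
  have hA := Zyg5.stepA HM hM0 x h h' hh hhh
  rcases eq_or_ne x t with rfl | hne
  · simp only [sub_self, abs_zero, zero_div, zero_mul, add_zero]
    calc |delta2 f x h - delta2 f x h'|
        ≤ 5 * M * ((h'-h)/h') * (1 + Real.log (h'/(h'-h))) := hA
      _ ≤ 8 * M * (((h'-h)/h') * (1 + Real.log (h'/(h'-h)))) := by nlinarith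
  · set s := |x - t| with hsdef
    have hs : 0 < s := by rw [hsdef]; exact abs_pos.mpr (sub_ne_zero.mpr hne)
    have hs2 : 2 * s < h' := by linarith
    have hsh' : s ≤ h' := by linarith
    have hB : |delta2 f x h' - delta2 f t h'| ≤ 4 * M * (s/h') * (1 + Real.log (h'/s)) := by
      rcases lt_or_gt_of_ne hne with hlt | hgt
      · have hd : 0 < t - x := by linarith
        have := Zyg5.stepB HM x (t - x) h' hd (by
          have : s = t - x := by rw [hsdef, abs_sub_comm, abs_of_pos hd]
          linarith)
        rw [show x + (t - x) = t by ring] at this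
        have es : s = t - x := by rw [hsdef, abs_sub_comm, abs_of_pos hd]
        rw [es]; exact this
      · have hd : 0 < x - t := by linarith
        have := Zyg5.stepB HM t (x - t) h' hd (by
          have : s = x - t := by rw [hsdef, abs_of_pos hd]
          linarith)
        rw [show t + (x - t) = x by ring, abs_sub_comm] at this
        have es : s = x - t := by rw [hsdef, abs_of_pos hd]
        rw [es]; exact this
    -- conversion: 1 + log(h'/s) ≤ 2 * log(h'/s + 1)
    have hconv : 1 + Real.log (h'/s) ≤ 2 * Real.log (h'/s + 1) := by
      have h2s : (2:ℝ) < h'/s := by rw [lt_div_iff₀ hs]; linarith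
      have hlog3 : (1:ℝ) < Real.log 3 := by
        rw [Real.lt_log_iff_exp_lt (by norm_num : (0:ℝ) < 3)]
        have := Real.exp_one_lt_d9
        linarith
      have h1 : Real.log 3 < Real.log (h'/s + 1) :=
        Real.log_lt_log (by norm_num) (by linarith)
      have h2 : Real.log (h'/s) ≤ Real.log (h'/s + 1) :=
        Real.log_le_log (by positivity) (by linarith)
      linarith
    have hB2 : |delta2 f x h' - delta2 f t h'| ≤ 8 * (M * ((s/h') * Real.log (h'/s + 1))) := by
      have hq : (0:ℝ) ≤ M * (s/h') := mul_nonneg hM0 (by positivity)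
      calc |delta2 f x h' - delta2 f t h'|
          ≤ 4 * M * (s/h') * (1 + Real.log (h'/s)) := hB
        _ ≤ 4 * M * (s/h') * (2 * Real.log (h'/s + 1)) := by nlinarith
        _ = 8 * (M * ((s/h') * Real.log (h'/s + 1))) := by ring
    have htri : |delta2 f x h - delta2 f t h'|
        ≤ |delta2 f x h - delta2 f x h'| + |delta2 f x h' - delta2 f t h'| :=
      abs_sub_le _ _ _
    calc |delta2 f x h - delta2 f t h'|
        ≤ |delta2 f x h - delta2 f x h'| + |delta2 f x h' - delta2 f t h'| := htri
      _ ≤ 5 * M * ((h'-h)/h') * (1 + Real.log (h'/(h'-h)))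
          + 8 * (M * ((s/h') * Real.log (h'/s + 1))) := by linarith
      _ ≤ 8 * M * (((h'-h)/h') * (1 + Real.log (h'/(h'-h)))
          + (s/h') * Real.log (h'/s + 1)) := by nlinarith
end
end

section
/- There exists an absolute constant C > 0 such that for every f in the Zygmund class Λ_*, every h > 0 and every x, t ∈ ℝ with |x − t| > h/2, one has |Δ₁f(x,h) − Δ₁f(t,h)| ≤ C ‖f‖_* log(|x−t|/h + 1). -/
noncomputable section
open MeasureTheory
open scoped ENNReal NNReal

/-- First divided difference `Δ₁f(x,h) = (f(x+h) - f(x))/h`. -/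
def delta1 (f : ℝ → ℝ) (x h : ℝ) : ℝ := (f (x + h) - f x) / h

/-!
Subtracting an affine function does not change second differences, and a continuous function
vanishing at both ends of `[a, b]` with Zygmund bound `M` is bounded by `M (b - a) / 2` there:
at a maximum `z₀` of `|g|`, the second difference of step `r` = distance to the nearer endpoint
gives `2 |g z₀| ≤ |g z₀| + M r`. Hence `f` stays within `M L / 2` of its chord on any
interval of length `L`, so slopes over nested intervals of comparable lengths differ by `O(M)`.
Halving the length `≈ log₂ (|x - t| / h)` times connects the slopes over `[x, x + h]` and
`[t, t + h]` through the slope over an interval containing both.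
-/

theorem exists_le_two_pow_of_three_halves_le {ρ : ℝ} (hρ : 3 / 2 ≤ ρ) :
    ∃ n : ℕ, ρ ≤ 2 ^ n ∧ (n + 1 : ℝ) ≤ 8 * Real.log ρ := by
  obtain ⟨m, hm, hm'⟩ := exists_nat_pow_near (by linarith : (1 : ℝ) ≤ ρ) one_lt_two
  refine ⟨m + 1, hm'.le, ?_⟩
  have hlog : 1 / 3 ≤ Real.log ρ := by
    have := Real.one_sub_inv_le_log_of_pos (by linarith : 0 < ρ)
    have : ρ⁻¹ ≤ 2 / 3 := by rw [inv_le_comm₀ (by linarith) (by norm_num)]; linarith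
    linarith
  have hm_log : m * Real.log 2 ≤ Real.log ρ := by
    rw [← Real.log_pow]
    exact Real.log_le_log (by positivity) hm
  push_cast
  nlinarith [Real.log_two_gt_d9, (Nat.cast_nonneg m : (0 : ℝ) ≤ m)]

namespace ZygBound

variable {f g : ℝ → ℝ} {M : ℝ}

theorem nonneg (hM : ZygBound f M) : 0 ≤ M :=
  (abs_nonneg _).trans (hM 0 1 one_pos)

theorem abs_second_diff_le (hM : ZygBound f M) (x : ℝ) {h : ℝ} (hh : 0 ≤ h) :
    |f (x + h) - 2 * f x + f (x - h)| ≤ M * h := by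
  rcases hh.eq_or_lt with rfl | hh
  · norm_num [two_mul]
  have := hM x h hh
  rwa [delta2, abs_div, abs_of_pos hh, div_le_iff₀ hh] at this

theorem sub_affine (hM : ZygBound f M) (p q : ℝ) : ZygBound (fun z => f z - (p + q * z)) M := by
  intro x h hh
  have : delta2 (fun z => f z - (p + q * z)) x h = delta2 f x h := by
    simp only [delta2]
    ring
  rw [this]
  exact hM x h hh

theorem abs_le_of_eq_zero_of_eq_zero (hg : Continuous g) (hM : ZygBound g M) {a b : ℝ}
    (hab : a ≤ b) (ha : g a = 0) (hb : g b = 0) {z : ℝ} (hz : z ∈ Set.Icc a b) :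
    |g z| ≤ M * (b - a) / 2 := by
  obtain ⟨z₀, ⟨ha₀, hb₀⟩, hmax⟩ :=
    isCompact_Icc.exists_isMaxOn (Set.nonempty_Icc.mpr hab)
    (hg.abs.continuousOn : ContinuousOn (fun z => |g z|) (Set.Icc a b))
  refine (hmax hz).trans ?_
  obtain ⟨r, hr₀, hr, hends⟩ : ∃ r, 0 ≤ r ∧ 2 * r ≤ b - a ∧
      |g (z₀ + r)| + |g (z₀ - r)| ≤ |g z₀| := by
    rcases le_total z₀ ((a + b) / 2) with hmid | hmid
    · refine ⟨z₀ - a, by linarith, by linarith, ?_⟩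
      have : |g (z₀ + (z₀ - a))| ≤ |g z₀| := hmax ⟨by linarith, by linarith⟩
      rw [sub_sub_cancel, ha, abs_zero, add_zero]
      exact this
    · refine ⟨b - z₀, by linarith, by linarith, ?_⟩
      have : |g (z₀ - (b - z₀))| ≤ |g z₀| := hmax ⟨by linarith, by linarith⟩
      rw [add_sub_cancel, hb, abs_zero, zero_add]
      exact this
  have hmax₀ : 2 * |g z₀| ≤ |g z₀| + M * r :=
    calc 2 * |g z₀|
        = |g (z₀ + r) + g (z₀ - r) - (g (z₀ + r) - 2 * g z₀ + g (z₀ - r))| := by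
          rw [← abs_two, ← abs_mul]
          ring_nf
      _ ≤ |g (z₀ + r)| + |g (z₀ - r)| + |g (z₀ + r) - 2 * g z₀ + g (z₀ - r)| :=
          (abs_sub _ _).trans (by gcongr; exact abs_add_le _ _)
      _ ≤ |g z₀| + M * r := add_le_add hends (hM.abs_second_diff_le z₀ hr₀)
  nlinarith [hM.nonneg]

theorem abs_sub_chord_le (hf : Continuous f) (hM : ZygBound f M) {a L z : ℝ} (hL : 0 < L)
    (hz : z ∈ Set.Icc a (a + L)) : |f z - (f a + delta1 f a L * (z - a))| ≤ M * L / 2 := by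
  have hchord := abs_le_of_eq_zero_of_eq_zero (by fun_prop)
    (hM.sub_affine (f a - delta1 f a L * a) (delta1 f a L)) (by linarith) (by ring)
    (by rw [delta1]; field_simp; ring) hz
  rw [add_sub_cancel_left] at hchord
  convert hchord using 3
  ring

theorem abs_delta1_sub_delta1_le (hf : Continuous f) (hM : ZygBound f M) {a L c u : ℝ}
    (hu : 0 < u) (hac : a ≤ c) (hcu : c + u ≤ a + L) :
    |delta1 f c u - delta1 f a L| ≤ M * L / u := by
  have hL : 0 < L := by linarith
  set dev := fun z => f z - (f a + delta1 f a L * (z - a))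
  have hdev : delta1 f c u - delta1 f a L = (dev (c + u) - dev c) / u := by
    simp only [dev, delta1]
    field_simp
    ring
  have hc := hM.abs_sub_chord_le hf hL ⟨hac, by linarith⟩ (z := c)
  have hcu' := hM.abs_sub_chord_le hf hL ⟨by linarith, hcu⟩ (z := c + u)
  rw [hdev, abs_div, abs_of_pos hu]
  gcongr
  linarith [abs_sub (dev (c + u)) (dev c)]

theorem abs_delta1_sub_delta1_le_of_le_two_pow (hf : Continuous f) (hM : ZygBound f M) (n : ℕ)
    {a L c u : ℝ} (hu : 0 < u) (hL : L ≤ 2 ^ n * u) (hac : a ≤ c) (hcu : c + u ≤ a + L) :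
    |delta1 f c u - delta1 f a L| ≤ 2 * M * (n + 1) := by
  induction n generalizing a L with
  | zero =>
    have := hM.abs_delta1_sub_delta1_le hf hu hac hcu
    rw [pow_zero, one_mul] at hL
    have : M * L / u ≤ M := by
      rw [div_le_iff₀ hu]
      exact mul_le_mul_of_nonneg_left hL hM.nonneg
    push_cast
    linarith [hM.nonneg]
  | succ n ih =>
    -- pass through an interval of length `max (L / 2) u` between `[c, c + u]` and `[a, a + L]`
    set L' := max (L / 2) u
    set a' := min c (a + L - L')
    have hL' : L' ≤ 2 ^ n * u := by
      rw [pow_succ] at hL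
      exact max_le (by linarith) (le_mul_of_one_le_left hu.le (one_le_pow₀ one_le_two))
    have huL' : u ≤ L' := le_max_right _ _
    have hLL' : L ≤ 2 * L' := by linarith [le_max_left (L / 2) u]
    have hL'L : L' ≤ L := max_le (by linarith) (by linarith)
    have ha' : a ≤ a' := le_min hac (by linarith)
    have ha'L' : a' + L' ≤ a + L := by linarith [min_le_right c (a + L - L')]
    have hcu' : c + u ≤ a' + L' := by
      rcases min_choice c (a + L - L') with h | h <;> simp only [a', h] <;> linarith
    have hinner := ih hL' (min_le_left _ _) hcu'
    have houter := hM.abs_delta1_sub_delta1_le hf (by linarith) ha' ha'L'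
    have : M * L / L' ≤ 2 * M := by
      rw [div_le_iff₀ (by linarith)]
      nlinarith [hM.nonneg]
    push_cast
    linarith [abs_sub_le (delta1 f c u) (delta1 f a' L') (delta1 f a L)]

theorem abs_delta1_sub_delta1_le_log (hf : Continuous f) (hM : ZygBound f M) {x t h : ℝ}
    (hh : 0 < h) (hxt : h / 2 < |x - t|) :
    |delta1 f x h - delta1 f t h| ≤ 32 * M * Real.log (|x - t| / h + 1) := by
  wlog htx : t ≤ x generalizing x t
  · rw [abs_sub_comm, abs_sub_comm x]
    exact this (by rwa [abs_sub_comm]) (le_of_not_ge htx)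
  rw [abs_of_nonneg (sub_nonneg.2 htx)] at hxt ⊢
  obtain ⟨n, hρn, hn⟩ := exists_le_two_pow_of_three_halves_le
    (by rw [← sub_le_iff_le_add, le_div_iff₀ hh]; linarith : 3 / 2 ≤ (x - t) / h + 1)
  -- `[t, t + h]` and `[x, x + h]` lie in `[t, x + h]`, of length `((x - t) / h + 1) * h`
  have hL : x - t + h ≤ 2 ^ n * h := by
    calc x - t + h = ((x - t) / h + 1) * h := by field_simp
      _ ≤ 2 ^ n * h := by gcongr
  have hx := hM.abs_delta1_sub_delta1_le_of_le_two_pow hf n hh hL htx (by linarith)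
  have ht := hM.abs_delta1_sub_delta1_le_of_le_two_pow hf n hh hL (le_refl t) (by linarith)
  calc |delta1 f x h - delta1 f t h| ≤ 4 * M * (n + 1) := by
        linarith [abs_sub_le (delta1 f x h) (delta1 f t (x - t + h)) (delta1 f t h),
          abs_sub_comm (delta1 f t (x - t + h)) (delta1 f t h)]
    _ ≤ 32 * M * Real.log ((x - t) / h + 1) := by nlinarith [hM.nonneg]

end ZygBound

theorem MemZygmund.zygBound_zygNorm {f : ℝ → ℝ} (hf : MemZygmund f) :
    ZygBound f (zygNorm f) := by
  obtain ⟨M, hM⟩ := hf.2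
  have hne : {M | 0 ≤ M ∧ ZygBound f M}.Nonempty := ⟨M, hM.nonneg, hM⟩
  exact fun x h hh => le_csInf hne fun _ hM' => hM'.2 x h hh

/-- Estimate (2.3): for `|x - t| > h/2`,
`|Δ₁f(x,h) - Δ₁f(t,h)| ≤ C‖f‖_* log(|x-t|/h + 1)`. -/
theorem stmt6 : ∃ C > (0:ℝ), ∀ f : ℝ → ℝ, MemZygmund f →
    ∀ x t h : ℝ, 0 < h → h / 2 < |x - t| →
    |delta1 f x h - delta1 f t h| ≤ C * zygNorm f * Real.log (|x - t| / h + 1) :=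
  ⟨32, by norm_num, fun _ hf _ _ _ hh hxt =>
    hf.zygBound_zygNorm.abs_delta1_sub_delta1_le_log hf.1 hh hxt⟩
end
end

section
/- There exists an absolute constant C > 0 such that for every f in the Zygmund class Λ_*, every h > 0 and every x, t ∈ ℝ with |x − t| < h/2, one has |Δ₂f(x,h) − Δ₂f(t,h)| ≤ C ‖f‖_* (|x−t|/h) log(h/|x−t| + 1). -/
noncomputable section
open MeasureTheory
open scoped ENNReal NNReal

/-- Dyadic doubling estimate for Zygmund functions:
`|f(u + 2^k δ) - f u - 2^k (f(u+δ) - f u)| ≤ 2^k k M δ / 2`. -/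
lemma doubling_est (f : ℝ → ℝ) (M δ : ℝ)
    (hb : ∀ c s : ℝ, 0 < s → |f (c + s) - 2 * f c + f (c - s)| ≤ M * s) (hδ : 0 < δ) :
    ∀ k : ℕ, ∀ u : ℝ,
      |f (u + 2 ^ k * δ) - f u - 2 ^ k * (f (u + δ) - f u)| ≤ 2 ^ k * k * M * δ / 2 := by
  intro k
  induction k with
  | zero => intro u; simp
  | succ k ih =>
    intro u
    have h1 := hb (u + 2 ^ k * δ) (2 ^ k * δ) (by positivity)
    have h2 := ih u
    have a1 : u + 2 ^ k * δ + 2 ^ k * δ = u + 2 ^ (k + 1) * δ := by ring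
    have a2 : u + 2 ^ k * δ - 2 ^ k * δ = u := by ring
    rw [a1, a2] at h1
    have key : f (u + 2 ^ (k + 1) * δ) - f u - 2 ^ (k + 1) * (f (u + δ) - f u)
        = (f (u + 2 ^ (k + 1) * δ) - 2 * f (u + 2 ^ k * δ) + f u)
          + 2 * (f (u + 2 ^ k * δ) - f u - 2 ^ k * (f (u + δ) - f u)) := by ring
    rw [key]
    calc |_ + 2 * _| ≤ |f (u + 2 ^ (k + 1) * δ) - 2 * f (u + 2 ^ k * δ) + f u|
          + |2 * (f (u + 2 ^ k * δ) - f u - 2 ^ k * (f (u + δ) - f u))| := abs_add_le _ _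
      _ ≤ M * (2 ^ k * δ) + 2 * (2 ^ k * k * M * δ / 2) := by
          rw [abs_mul, abs_two]; gcongr
      _ = 2 ^ (k + 1) * (k + 1 : ℕ) * M * δ / 2 := by push_cast; ring

set_option maxHeartbeats 1000000 in
/-- Main quantitative estimate, for `x = t + δ` with `0 < δ < h/2`. -/
lemma key_est (f : ℝ → ℝ) (M : ℝ) (hM0 : 0 ≤ M)
    (hb : ∀ c s : ℝ, 0 < s → |f (c + s) - 2 * f c + f (c - s)| ≤ M * s)
    (t δ h : ℝ) (hδ : 0 < δ) (hh : 0 < h) (hlt : δ < h / 2) :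
    |delta2 f (t + δ) h - delta2 f t h| ≤ 8 * M * ((δ / h) * Real.log (h / δ + 1)) := by
  have hr : (2 : ℝ) ≤ h / δ := by rw [le_div_iff₀ hδ]; linarith
  obtain ⟨n, hn1, hn2⟩ := exists_nat_pow_near (by linarith : (1 : ℝ) ≤ h / δ)
    (by norm_num : (1 : ℝ) < 2)
  set k : ℕ := n + 1 with hk
  have hP1 : h / δ ≤ (2 : ℝ) ^ k := le_of_lt hn2
  have hP0 : (0 : ℝ) < 2 ^ k := by positivity
  have hA := doubling_est f M δ hb hδ k
  have hZ1 := hb (t + 2 ^ k * δ) h hh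
  have hZ2 := hb t h hh
  have e1 := hA (t + h)
  have e2 := hA t
  have e3 := hA (t - h)
  set D : ℝ := (f (t + δ + h) - 2 * f (t + δ) + f (t + δ - h))
    - (f (t + h) - 2 * f t + f (t - h)) with hD
  have hdel : delta2 f (t + δ) h - delta2 f t h = D / h := by
    simp only [delta2, hD]; ring
  have b1 : t + h + 2 ^ k * δ = t + 2 ^ k * δ + h := by ring
  have b2 : t + h + δ = t + δ + h := by ring
  have b3 : t - h + 2 ^ k * δ = t + 2 ^ k * δ - h := by ring
  have b4 : t - h + δ = t + δ - h := by ring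
  rw [b1, b2] at e1
  rw [b3, b4] at e3
  have hid : 2 ^ k * D
      = (f (t + 2 ^ k * δ + h) - 2 * f (t + 2 ^ k * δ) + f (t + 2 ^ k * δ - h))
        - (f (t + h) - 2 * f t + f (t - h))
        - ((f (t + 2 ^ k * δ + h) - f (t + h) - 2 ^ k * (f (t + δ + h) - f (t + h)))
           - 2 * (f (t + 2 ^ k * δ) - f t - 2 ^ k * (f (t + δ) - f t))
           + (f (t + 2 ^ k * δ - h) - f (t - h) - 2 ^ k * (f (t + δ - h) - f (t - h)))) := by
    rw [hD]; ring
  have habs : |2 ^ k * D| ≤ 2 * (M * h) + 4 * (2 ^ k * k * M * δ / 2) := by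
    rw [abs_le] at hZ1 hZ2 e1 e2 e3
    rw [abs_le]
    constructor <;> linarith [hid]
  have hhP : h ≤ 2 ^ k * δ := by rw [div_le_iff₀ hδ] at hP1; linarith
  have hDb : |D| ≤ 2 * M * ((k : ℝ) + 1) * δ := by
    have h3 : (2 : ℝ) ^ k * |D| ≤ 2 ^ k * (2 * M * ((k : ℝ) + 1) * δ) := by
      have h4 : |2 ^ k * D| = 2 ^ k * |D| := by
        rw [abs_mul, abs_of_pos hP0]
      have h5 : M * h ≤ M * (2 ^ k * δ) := mul_le_mul_of_nonneg_left hhP hM0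
      nlinarith [habs]
    exact le_of_mul_le_mul_left h3 hP0
  set L : ℝ := Real.log (h / δ + 1) with hL
  have hL1 : 1 ≤ L := by
    rw [hL]
    have h2 : (3 : ℝ) ≤ h / δ + 1 := by linarith
    have h3 : (1 : ℝ) < Real.log 3 := by
      rw [Real.lt_log_iff_exp_lt (by norm_num)]
      calc Real.exp 1 < 2.7182818286 := Real.exp_one_lt_d9
        _ < 3 := by norm_num
    calc (1 : ℝ) ≤ Real.log 3 := h3.le
      _ ≤ Real.log (h / δ + 1) := Real.log_le_log (by norm_num) h2
  have hnlog : (n : ℝ) * Real.log 2 ≤ L := by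
    have h6 : Real.log ((2 : ℝ) ^ n) ≤ Real.log (h / δ) := Real.log_le_log (by positivity) hn1
    rw [Real.log_pow] at h6
    have h7 : Real.log (h / δ) ≤ L := Real.log_le_log (by positivity) (by linarith)
    linarith
  have hlog2 : (0.6931 : ℝ) ≤ Real.log 2 := by linarith [Real.log_two_gt_d9]
  have hk4 : (k : ℝ) + 1 ≤ 4 * L := by
    have hn0 : (0 : ℝ) ≤ (n : ℝ) := Nat.cast_nonneg n
    push_cast [hk]
    nlinarith
  rw [hdel, abs_div, abs_of_pos hh]
  have hfin : 8 * M * (δ / h * L) = (8 * M * δ * L) / h := by ring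
  rw [hfin]
  refine (div_le_div_iff_of_pos_right hh).mpr (hDb.trans ?_)
  nlinarith [mul_le_mul_of_nonneg_left hk4 (mul_nonneg hM0 hδ.le)]

/-- The Zygmund seminorm is nonnegative and is itself a Zygmund bound. -/
lemma zygNorm_spec (f : ℝ → ℝ) (hf : MemZygmund f) :
    0 ≤ zygNorm f ∧ ZygBound f (zygNorm f) := by
  obtain ⟨-, M, hM⟩ := hf
  have hne : {M | 0 ≤ M ∧ ZygBound f M}.Nonempty :=
    ⟨max M 0, le_max_right _ _, fun x h hh => (hM x h hh).trans (le_max_left _ _)⟩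
  refine ⟨le_csInf hne fun b hb => hb.1, fun x h hh => le_csInf hne fun b hb => hb.2 x h hh⟩

/-- Estimate (2.2): for `|x - t| < h/2`,
`|Δ₂f(x,h) - Δ₂f(t,h)| ≤ C‖f‖_* (|x-t|/h) log(h/|x-t| + 1)`. -/
theorem stmt7 : ∃ C > (0:ℝ), ∀ f : ℝ → ℝ, MemZygmund f →
    ∀ x t h : ℝ, 0 < h → |x - t| < h / 2 →
    |delta2 f x h - delta2 f t h| ≤ C * zygNorm f *
      ((|x - t| / h) * Real.log (h / |x - t| + 1)) := by
  refine ⟨8, by norm_num, ?_⟩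
  intro f hf x t h hh hlt
  obtain ⟨hM0, hM⟩ := zygNorm_spec f hf
  set M := zygNorm f with hMdef
  have hb : ∀ c s : ℝ, 0 < s → |f (c + s) - 2 * f c + f (c - s)| ≤ M * s := by
    intro c s hs
    have h1 := hM c s hs
    rw [delta2, abs_div, abs_of_pos hs, div_le_iff₀ hs] at h1
    linarith
  rcases lt_trichotomy x t with hxt | rfl | hxt
  · have hpos : 0 < t - x := by linarith
    have habs : |x - t| = t - x := by rw [abs_sub_comm]; exact abs_of_pos hpos
    have hlt' : t - x < h / 2 := by rw [habs] at hlt; exact hlt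
    have h1 := key_est f M hM0 hb x (t - x) h hpos hh hlt'
    rw [show x + (t - x) = t from by ring] at h1
    rw [abs_sub_comm, habs]
    exact h1
  · simp
  · have hpos : 0 < x - t := by linarith
    have habs : |x - t| = x - t := abs_of_pos hpos
    have hlt' : x - t < h / 2 := by rw [habs] at hlt; exact hlt
    have h1 := key_est f M hM0 hb t (x - t) h hpos hh hlt'
    rw [show t + (x - t) = x from by ring] at h1
    rw [habs]
    exact h1
end
end

section
/- Let I and Ĩ be two adjacent finite intervals of the same length and fix α ∈ ℝ. Then there exist coverings G(I) = {J_j}_{j≥1} of I and G(Ĩ) = {J̃_j}_{j≥1} of Ĩ, both consisting of intervals of the translated dyadic grid D^α with pairwise disjoint interiors, such that |J_j| = |J̃_j| for every j and |J_{j+2}| ≤ |J_j|/2 for every j ≥ 1. -/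
noncomputable section
open MeasureTheory
open scoped ENNReal NNReal

/-- The translation `t_n` of the dyadic grid of generation `n`: `t_n = 0` for
`n ≥ 0`, and `t_n = (4^m - 1)/3` where `n = -2m+1` or `n = -2m` for `n < 0`. -/
def tshift (n : ℤ) : ℝ := if 0 ≤ n then 0 else ((4:ℝ) ^ (((1 - n) / 2).toNat) - 1) / 3

/-- Left endpoint of the `k`-th interval of generation `n` of the dyadic grid
translated by `-α` units. -/
def dyadicL (α : ℝ) (n k : ℤ) : ℝ := (k : ℝ) * 2 ^ (-n) - tshift n - α

/-- Right endpoint of the `k`-th interval of generation `n` of the dyadic grid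
translated by `-α` units. -/
def dyadicR (α : ℝ) (n k : ℤ) : ℝ := ((k : ℝ) + 1) * 2 ^ (-n) - tshift n - α

/-- The `k`-th dyadic interval of generation `n` in the translated grid `D^α`. -/
def dyadicIα (α : ℝ) (n k : ℤ) : Set ℝ := Set.Ico (dyadicL α n k) (dyadicR α n k)

/-- The `k`-th dyadic interval of generation `n` in the standard grid `D`. -/
def dyadicI (n k : ℤ) : Set ℝ := dyadicIα 0 n k

/-- Second divided difference of `f` on the dyadic interval `(n,k)` of the grid
`D^α`: `Δ₂f(I)` with centre the midpoint of `I` and step `|I|/2`. -/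
def delta2Dα (f : ℝ → ℝ) (α : ℝ) (n k : ℤ) : ℝ :=
  delta2 f ((dyadicL α n k + dyadicR α n k) / 2) (2 ^ (-n - 1))

/-- Second divided difference of `f` on a standard dyadic interval. -/
def delta2D (f : ℝ → ℝ) (n k : ℤ) : ℝ := delta2Dα f 0 n k

/-- `M` is a bound for the dyadic Zygmund seminorm `‖f‖_{*d}`. -/
def ZygDBound (f : ℝ → ℝ) (M : ℝ) : Prop := ∀ n k : ℤ, |delta2D f n k| ≤ M

/-- `f` belongs to the dyadic Zygmund class `Λ_{*d}`. -/
def MemZygmundD (f : ℝ → ℝ) : Prop := Continuous f ∧ ∃ M, ZygDBound f M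

/-- The dyadic Zygmund seminorm `‖f‖_{*d} = sup_{I ∈ D} |Δ₂f(I)|`. -/
def zygDNorm (f : ℝ → ℝ) : ℝ := sInf {M | 0 ≤ M ∧ ZygDBound f M}


open Set Filter Topology Function

/-!
Split the common length `l` greedily into pieces `2 ^ (-g 0) ≥ 2 ^ (-g 1) ≥ ⋯`, each the
largest power of two not exceeding half of what is left; then every generation occurs at
most twice and at least twice the current piece always remains. As the grid `D^α` is nested,
any interval `[c, c + l)` is tiled by grid intervals of exactly these lengths: grow a tiled
block from a grid point just above `c`, attaching each new tile to the left of the block if it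
still lies above `c` and otherwise to its right, where the remaining room guarantees that it
ends below `c + l`. Doing this for `I` and `Ĩ` with the same pieces gives the two coverings.
-/

lemma tshift_of_nonpos {n : ℤ} (hn : n ≤ 0) :
    tshift n = ((4 : ℝ) ^ ((1 - n) / 2).toNat - 1) / 3 := by
  unfold tshift
  split_ifs with h
  · obtain rfl : n = 0 := le_antisymm hn h
    norm_num
  · rfl

/-- This is what the shifts `t_n` are for: it makes the grid `D^α` nested. -/
lemma exists_tshift_succ_eq (n : ℤ) :
    ∃ m : ℤ, tshift (n + 1) = tshift n + m * 2 ^ (-(n + 1)) := by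
  rcases le_or_gt 0 n with hn | hn
  · refine ⟨0, ?_⟩
    simp [tshift, hn, show 0 ≤ n + 1 by omega]
  obtain ⟨p, hp⟩ : ∃ p : ℕ, n + 1 = -p := ⟨(-(n + 1)).toNat, by omega⟩
  rw [tshift_of_nonpos (by omega), tshift_of_nonpos (by omega)]
  rcases Nat.even_or_odd' p with ⟨q, rfl | rfl⟩
  · refine ⟨-1, ?_⟩
    rw [show ((1 - (n + 1)) / 2).toNat = q by omega, show ((1 - n) / 2).toNat = q + 1 by omega,
      show -(n + 1) = ((2 * q : ℕ) : ℤ) by omega, zpow_natCast, pow_mul, pow_succ]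
    norm_num
    ring
  · refine ⟨0, ?_⟩
    rw [show ((1 - (n + 1)) / 2).toNat = q + 1 by omega, show ((1 - n) / 2).toNat = q + 1 by omega]
    simp

def gridPoints (α : ℝ) (n : ℤ) : Set ℝ := range (dyadicL α n)

section Grid

variable {α x : ℝ} {n : ℤ}

lemma dyadicIα_eq_Ico (α : ℝ) (n k : ℤ) :
    dyadicIα α n k = Ico (dyadicL α n k) (dyadicL α n k + 2 ^ (-n)) := by
  rw [dyadicIα, dyadicR, dyadicL]
  ring_nf

lemma exists_dyadicIα_eq_Ico (hx : x ∈ gridPoints α n) :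
    ∃ k, dyadicIα α n k = Ico x (x + 2 ^ (-n)) := by
  obtain ⟨k, rfl⟩ := hx
  exact ⟨k, dyadicIα_eq_Ico α n k⟩

lemma gridPoints_subset_succ (α : ℝ) (n : ℤ) : gridPoints α n ⊆ gridPoints α (n + 1) := by
  rintro _ ⟨k, rfl⟩
  obtain ⟨m, hm⟩ := exists_tshift_succ_eq n
  refine ⟨2 * k + m, ?_⟩
  have h2 : (2 : ℝ) ^ (-n) = 2 * 2 ^ (-(n + 1)) := by
    rw [neg_add, zpow_add₀ two_ne_zero, zpow_neg_one]
    ring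
  simp only [dyadicL, hm, h2]
  push_cast
  ring

lemma gridPoints_mono (α : ℝ) : Monotone (gridPoints α) :=
  monotone_int_of_le_succ (gridPoints_subset_succ α)

lemma add_zpow_mem_gridPoints (hx : x ∈ gridPoints α n) : x + 2 ^ (-n) ∈ gridPoints α n := by
  obtain ⟨k, rfl⟩ := hx
  exact ⟨k + 1, by simp only [dyadicL]; push_cast; ring⟩

lemma sub_zpow_mem_gridPoints (hx : x ∈ gridPoints α n) : x - 2 ^ (-n) ∈ gridPoints α n := by
  obtain ⟨k, rfl⟩ := hx
  exact ⟨k - 1, by simp only [dyadicL]; push_cast; ring⟩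

lemma exists_mem_gridPoints_Icc (α c : ℝ) (n : ℤ) :
    ∃ x ∈ gridPoints α n, c ≤ x ∧ x ≤ c + 2 ^ (-n) := by
  have hw : (0 : ℝ) < 2 ^ (-n) := zpow_pos two_pos _
  set k := ⌈(c + tshift n + α) / 2 ^ (-n)⌉
  have hk₁ : c + tshift n + α ≤ k * 2 ^ (-n) := (div_le_iff₀ hw).1 (Int.le_ceil _)
  have hk₂ : (k - 1) * 2 ^ (-n) < c + tshift n + α :=
    (lt_div_iff₀ hw).1 (by linarith [Int.ceil_lt_add_one ((c + tshift n + α) / 2 ^ (-n))])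
  exact ⟨dyadicL α n k, ⟨k, rfl⟩, by rw [dyadicL]; linarith, by rw [dyadicL]; linarith⟩

end Grid

lemma two_zpow_neg_le_half_of_lt {m n : ℤ} (h : m < n) : (2 : ℝ) ^ (-n) ≤ 2 ^ (-m) / 2 := by
  calc (2 : ℝ) ^ (-n) ≤ 2 ^ (-m - 1) := zpow_le_zpow_right₀ one_le_two (by omega)
    _ = 2 ^ (-m) / 2 := by rw [zpow_sub_one₀ two_ne_zero, div_eq_mul_inv]

def greedyRem (l : ℝ) : ℕ → ℝ
  | 0 => l
  | j + 1 => greedyRem l j - 2 ^ Int.log 2 (greedyRem l j / 2)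

def greedyGen (l : ℝ) (j : ℕ) : ℤ := -Int.log 2 (greedyRem l j / 2)

section Greedy

variable {l : ℝ}

lemma greedyRem_succ (l : ℝ) (j : ℕ) :
    greedyRem l (j + 1) = greedyRem l j - 2 ^ (-greedyGen l j) := by
  rw [greedyGen, neg_neg, greedyRem]

lemma greedyRem_pos (hl : 0 < l) (j : ℕ) : 0 < greedyRem l j := by
  induction j with
  | zero => exact hl
  | succ j ih =>
    have h := Int.zpow_log_le_self (b := 2) one_lt_two (half_pos ih)
    rw [greedyRem]
    push_cast at h
    linarith [zpow_pos (two_pos : (0 : ℝ) < 2) (Int.log 2 (greedyRem l j / 2))]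

lemma greedyRem_bounds (hl : 0 < l) (j : ℕ) :
    2 * 2 ^ (-greedyGen l j) ≤ greedyRem l j ∧ greedyRem l j < 4 * 2 ^ (-greedyGen l j) := by
  have h₁ := Int.zpow_log_le_self (b := 2) one_lt_two (half_pos (greedyRem_pos hl j))
  have h₂ := Int.lt_zpow_succ_log_self (b := 2) one_lt_two (greedyRem l j / 2)
  push_cast at h₁ h₂
  rw [zpow_add_one₀ two_ne_zero] at h₂
  rw [greedyGen, neg_neg]
  constructor <;> linarith

lemma greedyRem_succ_le (hl : 0 < l) (j : ℕ) : greedyRem l (j + 1) ≤ 3 / 4 * greedyRem l j := by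
  rw [greedyRem_succ]
  linarith [(greedyRem_bounds hl j).2]

lemma tendsto_greedyRem (hl : 0 < l) : Tendsto (greedyRem l) atTop (𝓝 0) := by
  have hgeom : ∀ j, greedyRem l j ≤ (3 / 4) ^ j * l := by
    intro j
    induction j with
    | zero => simp [greedyRem]
    | succ j ih => rw [pow_succ]; nlinarith [greedyRem_succ_le hl j]
  refine squeeze_zero (fun j => (greedyRem_pos hl j).le) hgeom ?_
  simpa using (tendsto_pow_atTop_nhds_zero_of_lt_one (by norm_num : (0 : ℝ) ≤ 3 / 4)
    (by norm_num)).mul_const l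

lemma greedyGen_mono (hl : 0 < l) : Monotone (greedyGen l) := by
  refine monotone_nat_of_le_succ fun j => neg_le_neg (Int.log_mono_right ?_ ?_)
  · exact half_pos (greedyRem_pos hl _)
  · rw [greedyRem_succ]
    linarith [zpow_pos (two_pos : (0 : ℝ) < 2) (-greedyGen l j)]

lemma greedyGen_lt_add_two (hl : 0 < l) (j : ℕ) : greedyGen l j < greedyGen l (j + 2) := by
  suffices h : greedyRem l (j + 2) < 2 * 2 ^ (-greedyGen l j) by
    have := (Int.lt_zpow_iff_log_lt (b := 2) (x := -greedyGen l j) one_lt_two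
      (half_pos (greedyRem_pos hl (j + 2)))).1 (by push_cast; linarith)
    simp only [greedyGen] at this ⊢
    omega
  have hmono : greedyGen l j ≤ greedyGen l (j + 1) := greedyGen_mono hl j.le_succ
  have hrem₁ := greedyRem_succ l j
  have hrem₂ := greedyRem_succ l (j + 1)
  have hbd₀ := (greedyRem_bounds hl j).2
  have hbd₁ := (greedyRem_bounds hl (j + 1)).2
  rcases hmono.eq_or_lt with heq | hlt
  · rw [← heq] at hrem₂
    linarith
  · have := two_zpow_neg_le_half_of_lt hlt
    linarith [zpow_pos (two_pos : (0 : ℝ) < 2) (-greedyGen l (j + 1))]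

end Greedy

section Tiling

variable (c : ℝ) (s : ℕ → ℝ) (x₀ : ℝ)

def tiledEnds : ℕ → ℝ × ℝ
  | 0 => (x₀, x₀)
  | j + 1 =>
    if c + s j ≤ (tiledEnds j).1 then ((tiledEnds j).1 - s j, (tiledEnds j).2)
    else ((tiledEnds j).1, (tiledEnds j).2 + s j)

def tileStart (j : ℕ) : ℝ :=
  if c + s j ≤ (tiledEnds c s x₀ j).1 then (tiledEnds c s x₀ j).1 - s j
  else (tiledEnds c s x₀ j).2

def tile (j : ℕ) : Set ℝ := Ico (tileStart c s x₀ j) (tileStart c s x₀ j + s j)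

variable {c s x₀}

lemma tiledEnds_fst_le_snd (hs : ∀ j, 0 ≤ s j) (j : ℕ) :
    (tiledEnds c s x₀ j).1 ≤ (tiledEnds c s x₀ j).2 := by
  induction j with
  | zero => exact le_rfl
  | succ j ih =>
    rw [tiledEnds]
    split_ifs <;> linarith [hs j]

lemma Ico_tiledEnds_succ (hs : ∀ j, 0 ≤ s j) (j : ℕ) :
    Ico (tiledEnds c s x₀ (j + 1)).1 (tiledEnds c s x₀ (j + 1)).2 =
      tile c s x₀ j ∪ Ico (tiledEnds c s x₀ j).1 (tiledEnds c s x₀ j).2 := by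
  have hXY := tiledEnds_fst_le_snd hs (x₀ := x₀) (c := c) j
  rw [tiledEnds, tile, tileStart]
  split_ifs
  · rw [sub_add_cancel, Ico_union_Ico_eq_Ico (by linarith [hs j]) hXY]
  · rw [union_comm, Ico_union_Ico_eq_Ico hXY (by linarith [hs j])]

lemma disjoint_tile_Ico_tiledEnds (j : ℕ) :
    Disjoint (tile c s x₀ j) (Ico (tiledEnds c s x₀ j).1 (tiledEnds c s x₀ j).2) := by
  rw [tile, tileStart]
  split_ifs
  · rw [sub_add_cancel]
    exact Ico_disjoint_Ico_same
  · exact Ico_disjoint_Ico_same.symm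

lemma Ico_tiledEnds_eq_biUnion (hs : ∀ j, 0 ≤ s j) (j : ℕ) :
    Ico (tiledEnds c s x₀ j).1 (tiledEnds c s x₀ j).2 = ⋃ i < j, tile c s x₀ i := by
  induction j with
  | zero => simp [tiledEnds]
  | succ j ih => rw [Ico_tiledEnds_succ hs, ih, biUnion_lt_succ, union_comm]

lemma pairwise_disjoint_tile (hs : ∀ j, 0 ≤ s j) : Pairwise (Disjoint on (tile c s x₀)) := by
  refine (pairwise_disjoint_on _).2 fun i j hij => ?_
  refine (disjoint_tile_Ico_tiledEnds j).symm.mono_left ?_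
  rw [Ico_tiledEnds_eq_biUnion hs]
  exact subset_biUnion_of_mem (u := tile c s x₀) hij

lemma tiledEnds_mem_Icc {d : ℝ} {rem : ℕ → ℝ}
    (hrem : ∀ j, rem (j + 1) = rem j - s j) (hroom : ∀ j, 2 * s j ≤ rem j)
    (hx₀ : x₀ ∈ Icc c d) (hrem₀ : rem 0 = d - c) (j : ℕ) :
    c ≤ (tiledEnds c s x₀ j).1 ∧ (tiledEnds c s x₀ j).2 ≤ d ∧
      (tiledEnds c s x₀ j).1 - c + (d - (tiledEnds c s x₀ j).2) = rem j := by
  induction j with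
  | zero => exact ⟨hx₀.1, hx₀.2, by rw [hrem₀, tiledEnds]; ring⟩
  | succ j ih =>
    obtain ⟨hX, hY, hsum⟩ := ih
    rw [tiledEnds, hrem]
    split_ifs with h
    · exact ⟨by linarith, hY, by linarith⟩
    · refine ⟨hX, ?_, by linarith⟩
      linarith [hroom j]

lemma tile_subset_Ico {d : ℝ} {rem : ℕ → ℝ} (hs : ∀ j, 0 ≤ s j)
    (hrem : ∀ j, rem (j + 1) = rem j - s j) (hroom : ∀ j, 2 * s j ≤ rem j)
    (hx₀ : x₀ ∈ Icc c d) (hrem₀ : rem 0 = d - c) (j : ℕ) : tile c s x₀ j ⊆ Ico c d := by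
  obtain ⟨hX, hY, -⟩ := tiledEnds_mem_Icc hrem hroom hx₀ hrem₀ (j + 1)
  calc tile c s x₀ j ⊆ tile c s x₀ j ∪ Ico (tiledEnds c s x₀ j).1 (tiledEnds c s x₀ j).2 :=
        subset_union_left
    _ = Ico (tiledEnds c s x₀ (j + 1)).1 (tiledEnds c s x₀ (j + 1)).2 :=
        (Ico_tiledEnds_succ hs j).symm
    _ ⊆ Ico c d := Ico_subset_Ico hX hY

lemma Ioo_subset_iUnion_tile {d : ℝ} {rem : ℕ → ℝ} (hs : ∀ j, 0 ≤ s j)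
    (hrem : ∀ j, rem (j + 1) = rem j - s j) (hroom : ∀ j, 2 * s j ≤ rem j)
    (hx₀ : x₀ ∈ Icc c d) (hrem₀ : rem 0 = d - c) (hlim : Tendsto rem atTop (𝓝 0)) :
    Ioo c d ⊆ ⋃ j, tile c s x₀ j := by
  rintro z ⟨hcz, hzd⟩
  obtain ⟨j, hj⟩ := (hlim.eventually_lt_const (lt_min (sub_pos.2 hcz) (sub_pos.2 hzd))).exists
  obtain ⟨hX, hY, hsum⟩ := tiledEnds_mem_Icc hrem hroom hx₀ hrem₀ j
  have hz : z ∈ Ico (tiledEnds c s x₀ j).1 (tiledEnds c s x₀ j).2 := by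
    constructor <;> linarith [min_le_left (z - c) (d - z), min_le_right (z - c) (d - z)]
  rw [Ico_tiledEnds_eq_biUnion hs] at hz
  exact iUnion₂_subset_iUnion _ _ hz

end Tiling

lemma tileStart_mem_gridPoints {α c x₀ : ℝ} {g : ℕ → ℤ} (hg : Monotone g)
    (hx₀ : x₀ ∈ gridPoints α (g 0)) (j : ℕ) :
    tileStart c (fun i => 2 ^ (-g i)) x₀ j ∈ gridPoints α (g j) := by
  have hends : ∀ j, (tiledEnds c (fun i => 2 ^ (-g i)) x₀ j).1 ∈ gridPoints α (g j) ∧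
      (tiledEnds c (fun i => 2 ^ (-g i)) x₀ j).2 ∈ gridPoints α (g j) := by
    intro j
    induction j with
    | zero => exact ⟨hx₀, hx₀⟩
    | succ j ih =>
      refine And.imp (gridPoints_mono α (hg j.le_succ) ·) (gridPoints_mono α (hg j.le_succ) ·) ?_
      rw [tiledEnds]
      split_ifs
      · exact ⟨sub_zpow_mem_gridPoints ih.1, ih.2⟩
      · exact ⟨ih.1, add_zpow_mem_gridPoints ih.2⟩
  rw [tileStart]
  split_ifs
  · exact sub_zpow_mem_gridPoints (hends j).1
  · exact (hends j).2

theorem exists_dyadicIα_tiling (α : ℝ) {c d : ℝ} (hcd : c < d) :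
    ∃ k : ℕ → ℤ, (∀ j, dyadicIα α (greedyGen (d - c) j) (k j) ⊆ Ico c d) ∧
      Ioo c d ⊆ ⋃ j, dyadicIα α (greedyGen (d - c) j) (k j) ∧
      Pairwise (Disjoint on fun j => dyadicIα α (greedyGen (d - c) j) (k j)) := by
  have hl : 0 < d - c := sub_pos.2 hcd
  set g := greedyGen (d - c)
  have hs : ∀ j, (0 : ℝ) ≤ 2 ^ (-g j) := fun j => (zpow_pos two_pos _).le
  have hroom : ∀ j, 2 * 2 ^ (-g j) ≤ greedyRem (d - c) j := fun j => (greedyRem_bounds hl j).1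
  obtain ⟨x₀, hx₀, hcx₀, hx₀c⟩ := exists_mem_gridPoints_Icc α c (g 0)
  have hx₀d : x₀ ∈ Icc c d :=
    ⟨hcx₀, by linarith [hroom 0, hs 0, show greedyRem (d - c) 0 = d - c from rfl]⟩
  choose k hk using fun j =>
    exists_dyadicIα_eq_Ico (tileStart_mem_gridPoints (c := c) (greedyGen_mono hl) hx₀ j)
  have htile : ∀ j, dyadicIα α (g j) (k j) = tile c (fun i => 2 ^ (-g i)) x₀ j := hk
  refine ⟨k, ?_⟩
  simp only [htile]
  exact ⟨tile_subset_Ico hs (greedyRem_succ _) hroom hx₀d rfl,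
    Ioo_subset_iUnion_tile hs (greedyRem_succ _) hroom hx₀d rfl (tendsto_greedyRem hl),
    pairwise_disjoint_tile hs⟩

/-- Lemma 4.2: for two adjacent intervals `I = [a,b)` and `Ĩ = I - |I|` of the
same length and any `α ∈ ℝ`, there are coverings `G(I) = {J_j}` of `I` and
`G(Ĩ) = {J̃_j}` of `Ĩ` by intervals of the grid `D^α` with pairwise disjoint
interiors, such that `|J_j| = |J̃_j|` for every `j` and `|J_{j+2}| ≤ |J_j|/2`. -/
theorem stmt11 (α a b : ℝ) (hab : a < b) :
    ∃ J Jt : ℕ → ℤ × ℤ,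
      (∀ j, dyadicIα α (J j).1 (J j).2 ⊆ Set.Ico a b) ∧
      (∀ j, dyadicIα α (Jt j).1 (Jt j).2 ⊆ Set.Ico (a - (b - a)) a) ∧
      (Set.Ioo a b ⊆ ⋃ j, dyadicIα α (J j).1 (J j).2) ∧
      (Set.Ioo (a - (b - a)) a ⊆ ⋃ j, dyadicIα α (Jt j).1 (Jt j).2) ∧
      (∀ i j : ℕ, i ≠ j →
        interior (dyadicIα α (J i).1 (J i).2) ∩ interior (dyadicIα α (J j).1 (J j).2) = ∅) ∧
      (∀ i j : ℕ, i ≠ j →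
        interior (dyadicIα α (Jt i).1 (Jt i).2) ∩ interior (dyadicIα α (Jt j).1 (Jt j).2) = ∅) ∧
      (∀ j : ℕ, (J j).1 = (Jt j).1) ∧
      (∀ j : ℕ, (2:ℝ) ^ (-(J (j+2)).1) ≤ (2:ℝ) ^ (-(J j).1) / 2) := by
  obtain ⟨k, hsub, hcov, hdisj⟩ := exists_dyadicIα_tiling α hab
  obtain ⟨kt, hsubt, hcovt, hdisjt⟩ := exists_dyadicIα_tiling α (c := a - (b - a)) (d := a)
    (by linarith)
  rw [show a - (a - (b - a)) = b - a by ring] at hsubt hcovt hdisjt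
  refine ⟨fun j => (greedyGen (b - a) j, k j), fun j => (greedyGen (b - a) j, kt j),
    hsub, hsubt, hcov, hcovt, fun i j hij => ?_, fun i j hij => ?_, fun _ => rfl,
    fun j => two_zpow_neg_le_half_of_lt (greedyGen_lt_add_two (sub_pos.2 hab) j)⟩
  · exact ((hdisj hij).mono interior_subset interior_subset).inter_eq
  · exact ((hdisjt hij).mono interior_subset interior_subset).inter_eq
end
end

section
/- Fix α ∈ ℝ and let f be a function in the dyadic Zygmund class Λ_{*d}^α with respect to the translated dyadic grid D^α. Then for all I, J ∈ D^α, |Δ₁f(I) − Δ₁f(J)| ≤ ‖f‖_{*d} · dist_α(I,J). -/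
noncomputable section
open MeasureTheory
open scoped ENNReal NNReal

/-- First divided difference of `f` on the interval `[a,b)`. -/
def delta1I (f : ℝ → ℝ) (a b : ℝ) : ℝ := (f b - f a) / (b - a)

/-- First divided difference of `f` on the dyadic interval `(n,k)` of `D^α`. -/
def delta1Dα (f : ℝ → ℝ) (α : ℝ) (n k : ℤ) : ℝ :=
  delta1I f (dyadicL α n k) (dyadicR α n k)

/-! Each dyadic interval is one of the two halves of its parent, and the first divided
difference on a half differs from the one on the whole by half of a second divided
difference of the parent. Walking from `I` and from `J` up to the common predecessor `P`
therefore costs at most `‖f‖_{*d} / 2` per generation. The translations `t_n` are exactly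
such that the grids stay nested: `t_{n-1} - t_n` is `2^{-n}` for even `n ≤ 0` and `0`
otherwise. -/

namespace DyadicZygmund

def tshiftStep (n : ℤ) : ℤ := if n ≤ 0 ∧ Even n then 1 else 0

lemma tshift_sub_one (n : ℤ) :
    tshift (n - 1) = tshift n + (tshiftStep n : ℝ) * 2 ^ (-n) := by
  unfold tshift tshiftStep
  rcases lt_trichotomy n 0 with hn | rfl | hn
  · rw [if_neg (by omega), if_neg (by omega)]
    rcases Int.even_or_odd n with ⟨m, hm⟩ | ⟨m, hm⟩
    · rw [if_pos ⟨hn.le, ⟨m, hm⟩⟩, show ((1 - n) / 2).toNat = (-m).toNat by omega,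
        show ((1 - (n - 1)) / 2).toNat = (-m).toNat + 1 by omega,
        show -n = ((2 * (-m).toNat : ℕ) : ℤ) by omega, zpow_natCast, pow_mul]
      push_cast
      ring
    · rw [if_neg (fun h => (Int.not_even_iff_odd.mpr ⟨m, hm⟩) h.2),
        show ((1 - (n - 1)) / 2).toNat = ((1 - n) / 2).toNat by omega]
      simp
  · norm_num
  · rw [if_pos (by omega), if_pos hn.le, if_neg (fun h => by omega)]
    simp

def parent (n k : ℤ) : ℤ := (k + tshiftStep n) / 2

def halfIndex (n k : ℤ) : ℤ := (k + tshiftStep n) % 2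

lemma halfIndex_eq_zero_or_one (n k : ℤ) : halfIndex n k = 0 ∨ halfIndex n k = 1 := by
  unfold halfIndex; omega

lemma two_zpow_neg_sub_one (n : ℤ) : (2 : ℝ) ^ (-(n - 1)) = 2 * 2 ^ (-n) := by
  rw [neg_sub, sub_eq_neg_add, zpow_add₀ two_ne_zero, zpow_one, mul_comm]

lemma dyadicR_eq (α : ℝ) (n k : ℤ) : dyadicR α n k = dyadicL α n k + 2 ^ (-n) := by
  unfold dyadicR dyadicL
  ring

lemma dyadicL_lt_dyadicR (α : ℝ) (n k : ℤ) : dyadicL α n k < dyadicR α n k := by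
  rw [dyadicR_eq]
  exact lt_add_of_pos_right _ (zpow_pos two_pos _)

lemma dyadicL_eq_parent (α : ℝ) (n k : ℤ) :
    dyadicL α n k = dyadicL α (n - 1) (parent n k) + (halfIndex n k : ℝ) * 2 ^ (-n) := by
  have hk : ((2 * parent n k - tshiftStep n + halfIndex n k : ℤ) : ℝ) = k := by
    unfold parent halfIndex
    congr 1
    omega
  unfold dyadicL
  rw [tshift_sub_one, two_zpow_neg_sub_one]
  push_cast at hk
  linear_combination (-2 ^ (-n) : ℝ) * hk

lemma dyadic_halves (α : ℝ) (n k : ℤ) :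
    (dyadicL α n k = dyadicL α (n - 1) (parent n k) ∨
      dyadicL α n k = dyadicL α (n - 1) (parent n k) + 2 ^ (-n)) ∧
    dyadicR α n k = dyadicL α n k + 2 ^ (-n) ∧
    dyadicR α (n - 1) (parent n k) = dyadicL α (n - 1) (parent n k) + 2 * 2 ^ (-n) := by
  refine ⟨?_, dyadicR_eq α n k, by rw [dyadicR_eq, two_zpow_neg_sub_one]⟩
  rcases halfIndex_eq_zero_or_one n k with h | h <;> rw [dyadicL_eq_parent, h] <;> simp

lemma dyadicIα_subset_parent (α : ℝ) (n k : ℤ) :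
    dyadicIα α n k ⊆ dyadicIα α (n - 1) (parent n k) := by
  obtain ⟨hL, hR, hRp⟩ := dyadic_halves α n k
  have hpos : (0 : ℝ) < 2 ^ (-n) := zpow_pos two_pos _
  apply Set.Ico_subset_Ico <;> rcases hL with hL | hL <;> linarith

lemma eq_of_mem_dyadicIα {α x : ℝ} {n k k' : ℤ}
    (hk : x ∈ dyadicIα α n k) (hk' : x ∈ dyadicIα α n k') : k = k' := by
  have hpos : (0 : ℝ) < 2 ^ (-n) := zpow_pos two_pos _
  obtain ⟨hl, hr⟩ := hk
  obtain ⟨hl', hr'⟩ := hk'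
  unfold dyadicL dyadicR at *
  have h₁ : (k : ℝ) < k' + 1 := lt_of_mul_lt_mul_right (by linarith) hpos.le
  have h₂ : (k' : ℝ) < k + 1 := lt_of_mul_lt_mul_right (by linarith) hpos.le
  norm_cast at h₁ h₂
  omega

lemma le_of_dyadicIα_subset {α : ℝ} {n k n' k' : ℤ}
    (h : dyadicIα α n k ⊆ dyadicIα α n' k') : n' ≤ n := by
  obtain ⟨hL, hR⟩ := (Set.Ico_subset_Ico_iff (dyadicL_lt_dyadicR α n k)).mp h
  rw [dyadicR_eq, dyadicR_eq α n'] at hR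
  unfold dyadicL at hL hR
  have hlen : (2 : ℝ) ^ (-n) ≤ 2 ^ (-n') := by nlinarith
  have := (zpow_le_zpow_iff_right₀ (by norm_num : (1 : ℝ) < 2)).mp hlen
  omega

lemma delta1I_left_half (f : ℝ → ℝ) (a : ℝ) {h : ℝ} (hh : h ≠ 0) :
    delta1I f a (a + h) = delta1I f a (a + 2 * h) - delta2 f (a + h) h / 2 := by
  simp only [delta1I, delta2, show a + h + h = a + 2 * h by ring, add_sub_cancel_right,
    add_sub_cancel_left]
  field_simp
  ring

lemma delta1I_right_half (f : ℝ → ℝ) (a : ℝ) {h : ℝ} (hh : h ≠ 0) :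
    delta1I f (a + h) (a + 2 * h) = delta1I f a (a + 2 * h) + delta2 f (a + h) h / 2 := by
  simp only [delta1I, delta2, show a + h + h = a + 2 * h by ring, add_sub_cancel_right,
    add_sub_cancel_left, show a + 2 * h - (a + h) = h by ring]
  field_simp
  ring

lemma abs_delta1Dα_sub_parent (f : ℝ → ℝ) (α : ℝ) (n k : ℤ) :
    |delta1Dα f α n k - delta1Dα f α (n - 1) (parent n k)|
      = |delta2Dα f α (n - 1) (parent n k)| / 2 := by
  obtain ⟨hL, hR, hRp⟩ := dyadic_halves α n k
  have hne : (2 : ℝ) ^ (-n) ≠ 0 := zpow_ne_zero _ two_ne_zero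
  have hΔ₂ : delta2Dα f α (n - 1) (parent n k)
      = delta2 f (dyadicL α (n - 1) (parent n k) + 2 ^ (-n)) (2 ^ (-n)) := by
    rw [delta2Dα, hRp, show -(n - 1) - 1 = -n by ring]
    ring_nf
  set a := dyadicL α (n - 1) (parent n k)
  unfold delta1Dα
  rw [hΔ₂, hR, hRp]
  rcases hL with hL | hL <;> rw [hL]
  · rw [delta1I_left_half f a hne, sub_sub_cancel_left, abs_neg, abs_div, abs_two]
  · rw [add_assoc, ← two_mul, delta1I_right_half f a hne, add_sub_cancel_left, abs_div, abs_two]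

def ancestor (n k : ℤ) : ℕ → ℤ
  | 0 => k
  | d + 1 => parent (n - d) (ancestor n k d)

lemma dyadicIα_subset_ancestor (α : ℝ) (n k : ℤ) :
    ∀ d : ℕ, dyadicIα α n k ⊆ dyadicIα α (n - d) (ancestor n k d)
  | 0 => by simp [ancestor]
  | d + 1 => by
    have h := dyadicIα_subset_parent α (n - d) (ancestor n k d)
    rw [sub_sub, ← Nat.cast_succ] at h
    exact (dyadicIα_subset_ancestor α n k d).trans h

lemma abs_delta1Dα_sub_ancestor_le (f : ℝ → ℝ) (α M : ℝ)
    (hf : ∀ n k : ℤ, |delta2Dα f α n k| ≤ M) (n k : ℤ) :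
    ∀ d : ℕ, |delta1Dα f α n k - delta1Dα f α (n - d) (ancestor n k d)| ≤ d * (M / 2)
  | 0 => by simp [ancestor]
  | d + 1 => by
    have hstep := abs_delta1Dα_sub_parent f α (n - d) (ancestor n k d)
    rw [sub_sub, ← Nat.cast_succ] at hstep
    calc |delta1Dα f α n k - delta1Dα f α (n - (d + 1 : ℕ)) (ancestor n k (d + 1))|
        ≤ |delta1Dα f α n k - delta1Dα f α (n - d) (ancestor n k d)|
          + |delta1Dα f α (n - d) (ancestor n k d)
            - delta1Dα f α (n - (d + 1 : ℕ)) (ancestor n k (d + 1))| := abs_sub_le _ _ _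
      _ ≤ d * (M / 2) + M / 2 := by
        rw [ancestor, hstep]
        gcongr
        exacts [abs_delta1Dα_sub_ancestor_le f α M hf n k d, hf _ _]
      _ = (d + 1 : ℕ) * (M / 2) := by push_cast; ring

lemma abs_delta1Dα_sub_le_of_subset (f : ℝ → ℝ) (α M : ℝ)
    (hf : ∀ n k : ℤ, |delta2Dα f α n k| ≤ M) {n k n' k' : ℤ}
    (h : dyadicIα α n k ⊆ dyadicIα α n' k') :
    |delta1Dα f α n k - delta1Dα f α n' k'| ≤ ((n - n' : ℤ) : ℝ) * (M / 2) := by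
  obtain ⟨d, hd⟩ := Int.eq_ofNat_of_zero_le (sub_nonneg.mpr (le_of_dyadicIα_subset h))
  have hgen : n - d = n' := by omega
  have hx : dyadicL α n k ∈ dyadicIα α n k := ⟨le_rfl, dyadicL_lt_dyadicR α n k⟩
  have hanc := dyadicIα_subset_ancestor α n k d
  rw [hgen] at hanc
  have hk : ancestor n k d = k' := eq_of_mem_dyadicIα (hanc hx) (h hx)
  simpa [hd, hgen, hk] using abs_delta1Dα_sub_ancestor_le f α M hf n k d

end DyadicZygmund

open DyadicZygmund in
theorem stmt12_general (α : ℝ) (f : ℝ → ℝ) (M : ℝ)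
    (hf : ∀ n k : ℤ, |delta2Dα f α n k| ≤ M)
    (n₁ k₁ n₂ k₂ np kp : ℤ)
    (hsub : dyadicIα α n₁ k₁ ∪ dyadicIα α n₂ k₂ ⊆ dyadicIα α np kp) :
    |delta1Dα f α n₁ k₁ - delta1Dα f α n₂ k₂| ≤ M * (((n₁ - np : ℤ) : ℝ) + ((n₂ - np : ℤ) : ℝ)) := by
  have h₁ := Set.subset_union_left.trans hsub
  have h₂ := Set.subset_union_right.trans hsub
  have hM : 0 ≤ M := (abs_nonneg _).trans (hf 0 0)
  have hd₁ : (0 : ℝ) ≤ ((n₁ - np : ℤ) : ℝ) := by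
    exact_mod_cast sub_nonneg.mpr (le_of_dyadicIα_subset h₁)
  have hd₂ : (0 : ℝ) ≤ ((n₂ - np : ℤ) : ℝ) := by
    exact_mod_cast sub_nonneg.mpr (le_of_dyadicIα_subset h₂)
  calc |delta1Dα f α n₁ k₁ - delta1Dα f α n₂ k₂|
      ≤ |delta1Dα f α n₁ k₁ - delta1Dα f α np kp|
        + |delta1Dα f α n₂ k₂ - delta1Dα f α np kp| := by
        rw [abs_sub_comm (delta1Dα f α n₂ k₂)]
        exact abs_sub_le _ _ _
    _ ≤ ((n₁ - np : ℤ) : ℝ) * (M / 2) + ((n₂ - np : ℤ) : ℝ) * (M / 2) :=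
        add_le_add (abs_delta1Dα_sub_le_of_subset f α M hf h₁)
          (abs_delta1Dα_sub_le_of_subset f α M hf h₂)
    _ ≤ M * (((n₁ - np : ℤ) : ℝ) + ((n₂ - np : ℤ) : ℝ)) := by
        nlinarith [mul_nonneg hM hd₁, mul_nonneg hM hd₂]

/-- Lemma 4.3: if `f` belongs to the dyadic Zygmund class of the grid `D^α` with
`‖f‖_{*d} ≤ M`, and `P = P_α(I,J)` is the minimal common predecessor in `D^α` of
the dyadic intervals `I, J ∈ D^α`, then
`|Δ₁f(I) - Δ₁f(J)| ≤ ‖f‖_{*d}·dist_α(I,J)`, where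
`dist_α(I,J) = log₂(|P|/|I|) + log₂(|P|/|J|)`. -/
theorem stmt12 (α : ℝ) (f : ℝ → ℝ) (hcont : Continuous f) (M : ℝ)
    (hf : ∀ n k : ℤ, |delta2Dα f α n k| ≤ M)
    (n₁ k₁ n₂ k₂ np kp : ℤ)
    (hsub : dyadicIα α n₁ k₁ ∪ dyadicIα α n₂ k₂ ⊆ dyadicIα α np kp)
    (hmin : ∀ n k : ℤ, dyadicIα α n₁ k₁ ∪ dyadicIα α n₂ k₂ ⊆ dyadicIα α n k →
      dyadicIα α np kp ⊆ dyadicIα α n k) :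
    |delta1Dα f α n₁ k₁ - delta1Dα f α n₂ k₂| ≤ M * (((n₁ - np : ℤ) : ℝ) + ((n₂ - np : ℤ) : ℝ)) :=
  stmt12_general α f M hf n₁ k₁ n₂ k₂ np kp hsub
end
end
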